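/- If every constraint of a linear program has rational coefficients and the LP has an optimal solution, then it has an optimal solution with all-rational coordinates. -/

import Mathlib

/-!
Fourier–Motzkin elimination turns a system of linear inequalities with rational coefficients
into one with one variable fewer, again with rational coefficients, whose solutions over any
ordered field are exactly the projections of the solutions of the original system.
Adding a variable `t ≥ cᵀx` and eliminating `x` leaves a rational system in `t` alone whose
real solution set is `[v, ∞)`, `v` the optimal value; some constraint is tight at `v`, so `v`
is rational. Since the projected system is the same over `ℚ`, `t = v` lifts to a rational
point `q` with `Aq ≥ b` and `cᵀq ≤ v`, which is optimal.
-/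

open Filter Topology

lemma exists_between_of_finite {ι κ α : Type*} [LinearOrder α] [Nonempty α] {s : Set ι}
    {t : Set κ} (hs : s.Finite) (ht : t.Finite) (f : ι → α) (g : κ → α)
    (h : ∀ i ∈ s, ∀ j ∈ t, f i ≤ g j) : ∃ x, (∀ i ∈ s, f i ≤ x) ∧ ∀ j ∈ t, x ≤ g j := by
  rcases s.eq_empty_or_nonempty with rfl | hs'
  · rcases t.eq_empty_or_nonempty with rfl | ht'
    · simp
    · obtain ⟨j, hj, hmin⟩ := t.exists_min_image g ht ht'
      exact ⟨g j, by simp, hmin⟩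
  · obtain ⟨i, hi, hmax⟩ := s.exists_max_image f hs hs'
    exact ⟨f i, hmax, h i hi⟩

/-- The linear inequality `∑ j, coeff j * x j ≥ rhs` in `k` variables. -/
structure LinIneq (k : ℕ) where
  coeff : Fin k → ℚ
  rhs : ℚ

namespace LinIneq

variable {K : Type*} [Field K] {k : ℕ}

instance : Add (LinIneq k) := ⟨fun p q => ⟨p.coeff + q.coeff, p.rhs + q.rhs⟩⟩

instance : SMul ℚ (LinIneq k) := ⟨fun a p => ⟨a • p.coeff, a * p.rhs⟩⟩

def slack (p : LinIneq k) (x : Fin k → K) : K := ∑ j, (p.coeff j : K) * x j - p.rhs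

def init (p : LinIneq (k + 1)) : LinIneq k := ⟨Fin.init p.coeff, p.rhs⟩

def lastCoeff (p : LinIneq (k + 1)) : ℚ := p.coeff (Fin.last k)

def normInit (p : LinIneq (k + 1)) : LinIneq k := |p.lastCoeff|⁻¹ • p.init

lemma slack_snoc (p : LinIneq (k + 1)) (y : Fin k → K) (t : K) :
    p.slack (Fin.snoc y t) = p.init.slack y + p.lastCoeff * t := by
  simp only [slack, init, lastCoeff, Fin.sum_univ_castSucc, Fin.snoc_castSucc, Fin.snoc_last,
    Fin.init]
  ring

variable [LinearOrder K] [IsStrictOrderedRing K]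

lemma slack_add (p q : LinIneq k) (x : Fin k → K) :
    (p + q).slack x = p.slack x + q.slack x := by
  change ∑ j, ((p.coeff j + q.coeff j : ℚ) : K) * x j - ((p.rhs + q.rhs : ℚ) : K) = _
  simp only [slack, Rat.cast_add, add_mul, Finset.sum_add_distrib]
  ring

lemma slack_smul (a : ℚ) (p : LinIneq k) (x : Fin k → K) :
    (a • p).slack x = a * p.slack x := by
  change ∑ j, ((a * p.coeff j : ℚ) : K) * x j - ((a * p.rhs : ℚ) : K) = _
  simp only [slack, Rat.cast_mul, mul_assoc, ← Finset.mul_sum]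
  ring

lemma slack_ratCast (p : LinIneq k) (x : Fin k → ℚ) :
    p.slack (fun j => (x j : K)) = ((p.slack x : ℚ) : K) := by
  simp [slack]

def IsSolution (L : List (LinIneq k)) (x : Fin k → K) : Prop := ∀ p ∈ L, 0 ≤ p.slack x

lemma isSolution_ratCast_iff {L : List (LinIneq k)} {x : Fin k → ℚ} :
    IsSolution L (fun j => (x j : K)) ↔ IsSolution L x := by
  simp only [IsSolution, slack_ratCast, Rat.cast_nonneg]

lemma nonneg_slack_snoc_iff_of_pos {p : LinIneq (k + 1)} (ha : 0 < p.lastCoeff)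
    (y : Fin k → K) (t : K) : 0 ≤ p.slack (Fin.snoc y t) ↔ -p.normInit.slack y ≤ t := by
  have ha' : (0 : K) < p.lastCoeff := Rat.cast_pos.2 ha
  have : p.slack (Fin.snoc y t) = p.lastCoeff * (p.normInit.slack y + t) := by
    rw [slack_snoc, normInit, slack_smul, abs_of_pos ha]
    push_cast
    field_simp
  rw [this, mul_nonneg_iff_of_pos_left ha', neg_le_iff_add_nonneg']

lemma nonneg_slack_snoc_iff_of_neg {p : LinIneq (k + 1)} (ha : p.lastCoeff < 0)
    (y : Fin k → K) (t : K) : 0 ≤ p.slack (Fin.snoc y t) ↔ t ≤ p.normInit.slack y := by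
  have ha' : (p.lastCoeff : K) < 0 := Rat.cast_lt_zero.2 ha
  have : p.slack (Fin.snoc y t) = -p.lastCoeff * (p.normInit.slack y - t) := by
    rw [slack_snoc, normInit, slack_smul, abs_of_neg ha]
    push_cast
    field_simp [ha'.ne]
    ring
  rw [this, mul_nonneg_iff_of_pos_left (neg_pos.2 ha'), sub_nonneg]

/-- Fourier–Motzkin elimination of the last variable: keep the constraints not involving it and
add up every normalized lower bound on it with every normalized upper bound. -/
def eliminateLast (L : List (LinIneq (k + 1))) : List (LinIneq k) :=
  (L.filter (·.lastCoeff = 0)).map init ++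
    (L.filter (0 < ·.lastCoeff) ×ˢ L.filter (·.lastCoeff < 0)).map
      fun pq => pq.1.normInit + pq.2.normInit

theorem isSolution_eliminateLast_iff {L : List (LinIneq (k + 1))} {y : Fin k → K} :
    IsSolution (eliminateLast L) y ↔ ∃ t, IsSolution L (Fin.snoc y t) := by
  simp only [IsSolution, eliminateLast, List.mem_append, List.mem_map, List.mem_filter,
    List.mem_product, decide_eq_true_eq, or_imp, forall_and, forall_exists_index, and_imp,
    Prod.forall]
  constructor
  · rintro ⟨hzero, hpair⟩
    obtain ⟨t, hlow, hupp⟩ := exists_between_of_finite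
      (s := {p | p ∈ L ∧ 0 < p.lastCoeff}) (t := {q | q ∈ L ∧ q.lastCoeff < 0})
      ((L.finite_toSet).subset fun _ h => h.1) ((L.finite_toSet).subset fun _ h => h.1)
      (fun p => -p.normInit.slack y) (fun q => q.normInit.slack y) fun p hp q hq => by
        have := hpair _ p q hp.1 hp.2 hq.1 hq.2 rfl
        rw [slack_add] at this
        linarith
    refine ⟨t, fun p hp => ?_⟩
    rcases lt_trichotomy p.lastCoeff 0 with hneg | hlast | hpos
    · exact (nonneg_slack_snoc_iff_of_neg hneg y t).2 (hupp p ⟨hp, hneg⟩)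
    · rw [slack_snoc, hlast, Rat.cast_zero, zero_mul, add_zero]
      exact hzero _ p hp hlast rfl
    · exact (nonneg_slack_snoc_iff_of_pos hpos y t).2 (hlow p ⟨hp, hpos⟩)
  · rintro ⟨t, ht⟩
    constructor
    · rintro _ p hp hzero rfl
      simpa [slack_snoc, hzero] using ht p hp
    · rintro _ p q hp hpos hq hneg rfl
      have hlow := (nonneg_slack_snoc_iff_of_pos hpos y t).1 (ht p hp)
      have hupp := (nonneg_slack_snoc_iff_of_neg hneg y t).1 (ht q hq)
      rw [slack_add]
      linarith

def project : {k : ℕ} → List (LinIneq (k + 1)) → List (LinIneq 1)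
  | 0, L => L
  | _ + 1, L => project (eliminateLast L)

theorem isSolution_project_iff {L : List (LinIneq (k + 1))} {t : K} :
    IsSolution (project L) (fun _ => t) ↔ ∃ x, x 0 = t ∧ IsSolution L x := by
  induction k with
  | zero =>
    refine ⟨fun h => ⟨_, rfl, h⟩, ?_⟩
    rintro ⟨x, rfl, hx⟩
    rwa [show x = fun _ => x 0 from funext fun j => congrArg x (Fin.fin_one_eq_zero j)] at hx
  | succ k ih =>
    simp only [project, ih, isSolution_eliminateLast_iff]
    constructor
    · rintro ⟨y, rfl, s, hs⟩
      exact ⟨_, Fin.snoc_castSucc (i := 0) .., hs⟩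
    · rintro ⟨x, rfl, hx⟩
      exact ⟨Fin.init x, rfl, x (Fin.last _), by rwa [Fin.snoc_init_self]⟩

/-- The least real solution of a rational system in one variable makes some constraint tight,
hence is rational. -/
theorem exists_ratCast_eq_of_isLeast {L : List (LinIneq 1)} {v : ℝ}
    (h : IsLeast {t | IsSolution L fun _ => t} v) : ∃ α : ℚ, (α : ℝ) = v := by
  by_contra! hv
  have hnear : ∀ p ∈ L, ∀ᶠ t in 𝓝 v, 0 ≤ p.slack fun _ => t := by
    intro p hp
    have hslack (t : ℝ) : p.slack (fun _ => t) = p.coeff 0 * t - p.rhs := by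
      simp [slack]
    by_cases h0 : p.coeff 0 = 0
    · refine Eventually.of_forall fun t => ?_
      simpa [hslack, h0] using h.1 p hp
    · have hpos : 0 < p.slack fun _ => v := by
        refine (h.1 p hp).lt_of_ne fun htight => hv (p.rhs / p.coeff 0) ?_
        rw [hslack] at htight
        push_cast
        field_simp
        linarith
      simp only [hslack] at hpos ⊢
      exact (continuousAt_const.eventually_lt (g := fun t => (p.coeff 0 : ℝ) * t - p.rhs)
        (by fun_prop) hpos).mono fun _ => le_of_lt
  obtain ⟨t, htv, ht⟩ := ((L.finite_toSet).eventually_all.2 hnear).exists_lt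
  exact (h.2 ht).not_gt htv

end LinIneq

open LinIneq

/-- The constraints `t ≥ cᵀy` and `Ay ≥ b` in the variables `Fin.cons t y`. -/
def lpSystem {m n : ℕ} (A : Fin m → Fin n → ℚ) (b : Fin m → ℚ) (c : Fin n → ℚ) :
    List (LinIneq (n + 1)) :=
  ⟨Fin.cons 1 (-c), 0⟩ :: List.ofFn fun i => ⟨Fin.cons 0 (A i), b i⟩

section LPSystem

variable {K : Type*} [Field K] [LinearOrder K] [IsStrictOrderedRing K] {m n : ℕ}
  (A : Fin m → Fin n → ℚ) (b : Fin m → ℚ) (c : Fin n → ℚ)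

lemma isSolution_lpSystem_cons_iff {t : K} {y : Fin n → K} :
    IsSolution (lpSystem A b c) (Fin.cons t y) ↔
      ∑ j, (c j : K) * y j ≤ t ∧ ∀ i, (b i : K) ≤ ∑ j, (A i j : K) * y j := by
  simp [IsSolution, lpSystem, slack, Fin.sum_univ_succ]

lemma isSolution_project_lpSystem_iff {t : K} :
    IsSolution (project (lpSystem A b c)) (fun _ => t) ↔
      ∃ y : Fin n → K, (∀ i, (b i : K) ≤ ∑ j, (A i j : K) * y j) ∧ ∑ j, (c j : K) * y j ≤ t := by
  rw [isSolution_project_iff]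
  constructor
  · rintro ⟨x, rfl, hx⟩
    rw [← Fin.cons_self_tail x, isSolution_lpSystem_cons_iff] at hx
    exact ⟨_, hx.2, hx.1⟩
  · rintro ⟨y, hy, hyt⟩
    exact ⟨Fin.cons t y, rfl, (isSolution_lpSystem_cons_iff A b c).2 ⟨hyt, hy⟩⟩

end LPSystem

/-- If every constraint of a linear program (min cᵀx s.t. Ax ≥ b, rational A, b, c,
interpreted over ℝ) has rational coefficients and the LP has an optimal solution,
then it has an optimal solution with all-rational coordinates. -/
theorem rational_lp_has_rational_optimum
    (m n : ℕ) (A : Fin m → Fin n → ℚ) (b : Fin m → ℚ) (c : Fin n → ℚ)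
    (x : Fin n → ℝ)
    (hfeas : ∀ i, (b i : ℝ) ≤ ∑ j, (A i j : ℝ) * x j)
    (hopt : ∀ y : Fin n → ℝ, (∀ i, (b i : ℝ) ≤ ∑ j, (A i j : ℝ) * y j) →
      ∑ j, (c j : ℝ) * x j ≤ ∑ j, (c j : ℝ) * y j) :
    ∃ q : Fin n → ℚ, (∀ i, b i ≤ ∑ j, A i j * q j) ∧
      ((∑ j, (c j : ℝ) * (q j : ℝ)) = ∑ j, (c j : ℝ) * x j) := by
  have hleast : IsLeast {t : ℝ | IsSolution (project (lpSystem A b c)) fun _ => t}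
      (∑ j, (c j : ℝ) * x j) := by
    refine ⟨(isSolution_project_lpSystem_iff A b c).2 ⟨x, hfeas, le_rfl⟩, fun t ht => ?_⟩
    obtain ⟨y, hy, hyt⟩ := (isSolution_project_lpSystem_iff A b c).1 ht
    exact (hopt y hy).trans hyt
  obtain ⟨α, hα⟩ := exists_ratCast_eq_of_isLeast hleast
  have hαsol : IsSolution (project (lpSystem A b c)) fun _ => α := by
    rw [← isSolution_ratCast_iff (K := ℝ), hα]
    exact hleast.1
  obtain ⟨q, hq, hqα⟩ := (isSolution_project_lpSystem_iff A b c).1 hαsol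
  have hqℝ : ∀ i, (b i : ℝ) ≤ ∑ j, (A i j : ℝ) * q j := fun i => by exact_mod_cast hq i
  refine ⟨q, hq, le_antisymm ?_ (hopt _ hqℝ)⟩
  rw [← hα]
  exact_mod_cast hqα
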